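/- arXiv:2403.02643 — 2 statements merged into one kernel-verified Lean document; each statement's English description precedes it below -/
import Mathlib

section
/- Let p, q be primes with q ≥ 3 and l an integer with l^q ≡ 1 (mod p). Fix 0 ≤ l' ≤ q−1 and ω ∈ ℂ a primitive q-th root of unity. Define σ : (ℤ/p ⋊ ℤ/q) × ℤ/q × ℤ/q → ℂˣ by σ(a^i b^j, x^m, x^n) = ω^{j l' ⌊(m+n)/q⌋}, where 0 ≤ m,n < q and j is the b-exponent. Then σ satisfies σ(g ◁ f, f', f'') · σ(g, f, f'f'') = σ(g, f, f') · σ(g, ff', f'') for all g in the group and f, f', f'' ∈ ℤ/q, where g ◁ f is the action fixing the b-component (a ◁ x^i = a^{l^i}, b ◁ x^i = b). Moreover σ(1, f, f') = σ(g, 1, f') = σ(g, f, 1) = 1. -/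
lemma aux_div1 (q a b : ℕ) (hq : 0 < q) : (a + b % q) / q + b / q = (a + b) / q := by
  conv_rhs => rw [← Nat.mod_add_div b q]
  rw [← Nat.add_assoc, Nat.add_mul_div_left _ _ hq]

lemma aux_div2 (q a b : ℕ) (hq : 0 < q) : a / q + (a % q + b) / q = (a + b) / q := by
  rw [Nat.add_comm (a % q) b, Nat.add_comm (a / q), aux_div1 q b a hq, Nat.add_comm]

theorem stmt_7 (p q : ℕ) (hp : p.Prime) (hq : q.Prime) (hq3 : 3 ≤ q)
    (l : ℕ) (hl : l ^ q ≡ 1 [MOD p]) (l' : ℕ) (hl' : l' ≤ q - 1)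
    (ω : ℂ) (hω : IsPrimitiveRoot ω q) :
    -- σ (a^i b^j) (x^m) (x^n) = ω ^ (j * l' * ⌊(m+n)/q⌋), with g = (i, j) the
    -- exponents of a, b, and f = m ∈ ℤ/q the exponent of x
    let σ : (ZMod p × ZMod q) → ZMod q → ZMod q → ℂ :=
      fun g f f' => ω ^ (g.2.val * l' * ((f.val + f'.val) / q))
    -- the action ◁ : a^i b^j ◁ x^f = a^(i * l^f) b^j
    let act : (ZMod p × ZMod q) → ZMod q → ZMod p × ZMod q :=
      fun g f => (g.1 * (l : ZMod p) ^ f.val, g.2)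
    (∀ (g : ZMod p × ZMod q) (f f' f'' : ZMod q),
        σ (act g f) f' f'' * σ g f (f' + f'') = σ g f f' * σ g (f + f') f'') ∧
      (∀ f f' : ZMod q, σ (0, 0) f f' = 1) ∧
      (∀ (g : ZMod p × ZMod q) (f' : ZMod q), σ g 0 f' = 1) ∧
      (∀ (g : ZMod p × ZMod q) (f : ZMod q), σ g f 0 = 1) := by
  intro σ act
  have hq0 : 0 < q := hq.pos
  haveI : NeZero q := ⟨hq0.ne'⟩
  refine ⟨?_, ?_, ?_, ?_⟩
  · intro g f f' f''
    simp only [σ, act]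
    rw [← pow_add, ← pow_add, ZMod.val_add, ZMod.val_add, ← Nat.mul_add, ← Nat.mul_add]
    congr 1
    rw [Nat.add_comm ((f'.val + f''.val) / q), aux_div1 q f.val _ hq0,
      aux_div2 q _ f''.val hq0, Nat.add_assoc]
  · intro f f'
    simp [σ, ZMod.val_zero]
  · intro g f'
    simp [σ, ZMod.val_zero, Nat.div_eq_of_lt (ZMod.val_lt f')]
  · intro g f
    simp [σ, ZMod.val_zero, Nat.div_eq_of_lt (ZMod.val_lt f)]
end

section
/- Let n ≥ 1, t ∈ ℂ a primitive n-th root of unity, and M an m×m integer matrix. Define η : (ℤ/n)^m × (ℤ/n)^m → ℂˣ by η(v, w) = t^{v·M·wᵀ}. Then η is a well-defined bicharacter, and the matrix [η(v,w)]_{v,w ∈ (ℤ/n)^m} is invertible if and only if the only v ∈ (ℤ/n)^m with v·M = 0 in (ℤ/n)^m is v = 0. -/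
open Matrix Finset

private lemma addChar_map_sum' {A C : Type*} [AddCommMonoid A] [CommMonoid C]
    (ψ : AddChar A C) {ι : Type*} (s : Finset ι) (f : ι → A) :
    ψ (∑ i ∈ s, f i) = ∏ i ∈ s, ψ (f i) := by
  induction s using Finset.cons_induction with
  | empty => simp
  | cons a s ha ih => simp [AddChar.map_add_eq_mul, ih]

private lemma zpow_eq_char {n : ℕ} [NeZero n] {t : ℂ} (tn : t ^ n = 1) (t0 : t ≠ 0) (a : ℤ) :
    t ^ a = AddChar.zmodChar n tn ((a : ZMod n)) := by
  rw [AddChar.zmodChar_apply]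
  have h1 : (((a : ZMod n).val : ℤ)) = a % n := ZMod.val_intCast a
  conv_lhs => rw [← Int.mul_ediv_add_emod a n]
  rw [zpow_add₀ t0, _root_.zpow_mul, zpow_natCast, tn, _root_.one_zpow, one_mul, ← h1, zpow_natCast]

private lemma char_sum_eq {n m : ℕ} [NeZero n] {e : AddChar (ZMod n) ℂ}
    (hprim : e.IsPrimitive) (u : Fin m → ZMod n) :
    ∑ w : Fin m → ZMod n, e (u ⬝ᵥ w) = if u = 0 then ((n : ℂ)) ^ m else 0 := by
  have h1 : ∀ w : Fin m → ZMod n, e (u ⬝ᵥ w) = ∏ j, e (u j * w j) := fun w =>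
    addChar_map_sum' e Finset.univ (fun j => u j * w j)
  rw [Finset.sum_congr rfl fun w _ => h1 w,
    ← Fintype.prod_sum (f := fun j x => e (u j * x))]
  by_cases hu : u = 0
  · subst hu
    simp [ZMod.card]
  · rw [if_neg hu]
    obtain ⟨j, hj⟩ := Function.ne_iff.mp hu
    refine Finset.prod_eq_zero (Finset.mem_univ j) ?_
    have := AddChar.sum_eq_zero_of_ne_one (R := ZMod n) (R' := ℂ) (hprim hj)
    simpa [AddChar.mulShift_apply] using this

theorem stmt_17 (n m : ℕ) [NeZero n] (t : ℂ) (ht : IsPrimitiveRoot t n)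
    (M : Matrix (Fin m) (Fin m) ℤ) :
    let η : (Fin m → ZMod n) → (Fin m → ZMod n) → ℂ :=
      fun v w => t ^ (∑ i, ∑ j, ((v i).val : ℤ) * M i j * ((w j).val : ℤ))
    ((∀ v v' w, η (v + v') w = η v w * η v' w) ∧
        (∀ v w w', η v (w + w') = η v w * η v w')) ∧
      (IsUnit (Matrix.of η) ↔
        ∀ v : Fin m → ZMod n, v ᵥ* M.map (Int.cast : ℤ → ZMod n) = 0 → v = 0) := by
  intro η
  have tn : t ^ n = 1 := ht.pow_eq_one
  have t0 : t ≠ 0 := by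
    intro h
    rw [h, zero_pow (NeZero.ne n)] at tn
    exact one_ne_zero tn.symm
  set e : AddChar (ZMod n) ℂ := AddChar.zmodChar n tn with he
  have hprim : e.IsPrimitive := AddChar.zmodChar_primitive_of_primitive_root n ht
  set M' : Matrix (Fin m) (Fin m) (ZMod n) := M.map (Int.cast : ℤ → ZMod n) with hM'
  have ηeq : ∀ v w, η v w = e ((v ᵥ* M') ⬝ᵥ w) := by
    intro v w
    simp only [η]
    rw [zpow_eq_char tn t0]
    congr 1
    push_cast
    simp only [ZMod.natCast_val, ZMod.cast_id]
    simp only [vecMul, dotProduct, Matrix.map_apply, Finset.sum_mul]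
    rw [Finset.sum_comm]
    exact Finset.sum_congr rfl fun i _ => Finset.sum_congr rfl fun j _ => by simp only [hM', Matrix.map_apply]; try ring
  constructor
  · constructor
    · intro v v' w
      rw [ηeq, ηeq, ηeq, add_vecMul, add_dotProduct, AddChar.map_add_eq_mul]
    · intro v w w'
      rw [ηeq, ηeq, ηeq, dotProduct_add, AddChar.map_add_eq_mul]
  · constructor
    · -- unit → trivial kernel
      intro hU v hv
      by_contra hv0
      have hrow : (Matrix.of η) v = (Matrix.of η) 0 := by
        funext w
        simp only [Matrix.of_apply]
        rw [ηeq, ηeq, hv, zero_vecMul, zero_dotProduct]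
      have hdet : (Matrix.of η).det = 0 := Matrix.det_zero_of_row_eq hv0 hrow
      have := (Matrix.isUnit_iff_isUnit_det _).mp hU
      rw [hdet] at this
      simp at this
    · intro hker
      set N' : Matrix (Fin m → ZMod n) (Fin m → ZMod n) ℂ :=
        Matrix.of (fun w v : Fin m → ZMod n => e (-((v ᵥ* M') ⬝ᵥ w))) with hN'
      have hprod : Matrix.of η * N' = ((n : ℂ) ^ m) • 1 := by
        ext v u
        simp only [Matrix.mul_apply, hN', Matrix.of_apply, Matrix.smul_apply,
          Matrix.one_apply, smul_eq_mul]
        have : ∀ w, η v w * e (-((u ᵥ* M') ⬝ᵥ w)) = e (((v - u) ᵥ* M') ⬝ᵥ w) := by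
          intro w
          rw [ηeq, ← AddChar.map_add_eq_mul, sub_vecMul, sub_dotProduct, ← sub_eq_add_neg]
        rw [Finset.sum_congr rfl fun w _ => this w, char_sum_eq hprim]
        have hiff : (v - u) ᵥ* M' = 0 ↔ v = u := by
          constructor
          · intro h
            have := hker _ h
            exact sub_eq_zero.mp this
          · intro h
            rw [h, sub_self, zero_vecMul]
        by_cases hvu : v = u
        · rw [if_pos (hiff.mpr hvu), if_pos hvu, mul_one]
        · rw [if_neg (fun h => hvu (hiff.mp h)), if_neg hvu, mul_zero]
      have hn0 : ((n : ℂ)) ^ m ≠ 0 := pow_ne_zero _ (Nat.cast_ne_zero.mpr (NeZero.ne n))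
      have hdet : (Matrix.of η).det * N'.det = ((n : ℂ) ^ m) ^ Fintype.card (Fin m → ZMod n) := by
        rw [← Matrix.det_mul, hprod, Matrix.smul_one_eq_diagonal, Matrix.det_diagonal]
        simp
      rw [Matrix.isUnit_iff_isUnit_det, isUnit_iff_ne_zero]
      intro h0
      rw [h0, zero_mul] at hdet
      exact pow_ne_zero _ hn0 hdet.symm
end
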